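/- arXiv:2510.06832 — 6 statements merged into one kernel-verified Lean document; each statement's English description precedes it below -/
import Mathlib

section
/- If G is a partial cube with minimum degree δ, then the cop number of G is at least ⌈δ/2⌉. -/
open SimpleGraph

/-- The `n`-dimensional hypercube: vertices are binary strings of length `n`,
adjacent iff they differ in exactly one bit (Hamming distance 1). -/
def Qcube (n : ℕ) : SimpleGraph (Fin n → Bool) where
  Adj x y := hammingDist x y = 1
  symm := ⟨fun x y h => by show hammingDist y x = 1; rwa [hammingDist_comm]⟩
  loopless := ⟨fun x h => by simp [hammingDist_self] at h⟩

/-- A strategy for `k` cops on a graph `G`: initial positions, and a move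
function; each cop stays put or moves along an edge. -/
structure CopStrategy {V : Type*} (G : SimpleGraph V) (k : ℕ) where
  init : Fin k → V
  move : (Fin k → V) → V → (Fin k → V)
  valid : ∀ c r i, move c r i = c i ∨ G.Adj (c i) (move c r i)

/-- A strategy for the robber: an initial position (chosen after seeing the
cops' initial positions) and a move function; the robber stays put or moves
along an edge. -/
structure RobberStrategy {V : Type*} (G : SimpleGraph V) (k : ℕ) where
  init : (Fin k → V) → V
  move : (Fin k → V) → V → V
  valid : ∀ c r, move c r = r ∨ G.Adj r (move c r)

/-- The sequence of game states `(cop positions, robber position)`: in each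
round the cops move first, then the robber. -/
def gamePlay {V : Type*} {G : SimpleGraph V} {k : ℕ} (S : CopStrategy G k)
    (R : RobberStrategy G k) : ℕ → (Fin k → V) × V
  | 0 => (S.init, R.init S.init)
  | (t + 1) =>
      let p := gamePlay S R t
      let c' := S.move p.1 p.2
      (c', R.move c' p.2)

/-- `k` cops have a winning strategy on `G`: for every robber strategy, at some
point a cop occupies the robber's vertex (either at a state, or in the middle
of a round just after the cops move). -/
def CopsWin {V : Type*} (G : SimpleGraph V) (k : ℕ) : Prop :=
  ∃ S : CopStrategy G k, ∀ R : RobberStrategy G k, ∃ t, ∃ i : Fin k,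
    (gamePlay S R t).1 i = (gamePlay S R t).2 ∨
    S.move (gamePlay S R t).1 (gamePlay S R t).2 i = (gamePlay S R t).2

/-- The cop number of `G`: the least number of cops that can guarantee
capturing the robber. -/
noncomputable def copNumber {V : Type*} (G : SimpleGraph V) : ℕ :=
  sInf {k | CopsWin G k}

/-!
A robber who, after each of his moves, stands neither on nor next to a cop is never caught.
Two distinct vertices of an induced subgraph of a hypercube have at most two common vertices in
their closed neighbourhoods (for vertices at distance two these are the two middle vertices of
the square they span), so a cop not on the robber's vertex `r` guards at most two of the
`deg r + 1 ≥ δ + 1` vertices the robber can move to. If `δ ≥ 2k + 1`, one of them is therefore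
unguarded by all `k` cops, and the robber survives forever.
-/

open Finset

namespace SimpleGraph

variable {V : Type*} {G : SimpleGraph V} {k : ℕ}

variable (G) in
def Unguarded (c : Fin k → V) (v : V) : Prop :=
  ∀ i, c i ≠ v ∧ ¬G.Adj (c i) v

lemma Unguarded.ne_of_move {c c' : Fin k → V} {v : V} (h : G.Unguarded c v)
    (hc' : ∀ i, c' i = c i ∨ G.Adj (c i) (c' i)) (i : Fin k) : c' i ≠ v := by
  rintro rfl
  rcases hc' i with h' | h'
  · exact (h i).1 h'.symm
  · exact (h i).2 h'

theorem not_copsWin_of_unguarded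
    (hinit : ∀ c : Fin k → V, ∃ v, G.Unguarded c v)
    (hmove : ∀ (c : Fin k → V) r, (∀ i, c i ≠ r) →
      ∃ v, (v = r ∨ G.Adj r v) ∧ G.Unguarded c v) :
    ¬CopsWin G k := by
  classical
  choose init hinit using hinit
  choose move hmove_adj hmove using hmove
  let R : RobberStrategy G k :=
    { init
      move c r := if h : ∀ i, c i ≠ r then move c r h else r
      valid c r := by
        by_cases h : ∀ i, c i ≠ r
        · simpa only [dif_pos h] using hmove_adj c r h
        · exact Or.inl (dif_neg h) }
  rintro ⟨S, hS⟩
  have hsafe : ∀ t, G.Unguarded (gamePlay S R t).1 (gamePlay S R t).2 := by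
    intro t
    induction t with
    | zero => exact hinit S.init
    | succ t ih =>
      have hfree := ih.ne_of_move (S.valid (gamePlay S R t).1 (gamePlay S R t).2)
      show G.Unguarded _ (R.move _ _)
      rw [show R.move _ _ = move _ _ hfree from dif_pos hfree]
      exact hmove _ _ hfree
  obtain ⟨t, i, hcap | hcap⟩ := hS R
  · exact ((hsafe t) i).1 hcap
  · exact (hsafe t).ne_of_move (S.valid _ _) i hcap

variable (G) in
theorem copsWin_card [Fintype V] : CopsWin G (Fintype.card V) :=
  ⟨⟨(Fintype.equivFin V).symm, fun c _ => c, fun _ _ _ => Or.inl rfl⟩,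
    fun R => ⟨0, Fintype.equivFin V (R.init _), Or.inl (Equiv.symm_apply_apply _ _)⟩⟩

variable [Fintype V] [DecidableEq V] [DecidableRel G.Adj]

variable (G) in
def closedNeighborFinset (v : V) : Finset V :=
  insert v (G.neighborFinset v)

@[simp]
lemma mem_closedNeighborFinset {v w : V} :
    w ∈ G.closedNeighborFinset v ↔ w = v ∨ G.Adj v w := by
  simp [closedNeighborFinset]

lemma card_closedNeighborFinset (v : V) : #(G.closedNeighborFinset v) = G.degree v + 1 :=
  card_insert_of_notMem (by simp)

theorem exists_unguarded_move
    (hG : ∀ u v, u ≠ v → #(G.closedNeighborFinset u ∩ G.closedNeighborFinset v) ≤ 2)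
    {c : Fin k → V} {r : V} (hr : 2 * k + 1 ≤ G.degree r) (hc : ∀ i, c i ≠ r) :
    ∃ v, (v = r ∨ G.Adj r v) ∧ G.Unguarded c v := by
  set covered := univ.biUnion fun i => G.closedNeighborFinset r ∩ G.closedNeighborFinset (c i)
  have hcovered : #covered ≤ 2 * k := calc
    #covered ≤ ∑ i : Fin k, #(G.closedNeighborFinset r ∩ G.closedNeighborFinset (c i)) :=
      card_biUnion_le
    _ ≤ ∑ _i : Fin k, 2 := sum_le_sum fun i _ => hG r (c i) (hc i).symm
    _ = 2 * k := by simp [mul_comm]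
  obtain ⟨v, hv, hvc⟩ : ∃ v ∈ G.closedNeighborFinset r, v ∉ covered :=
    exists_mem_notMem_of_card_lt_card (by rw [card_closedNeighborFinset]; omega)
  refine ⟨v, mem_closedNeighborFinset.1 hv, fun i => ?_⟩
  have : v ∉ G.closedNeighborFinset (c i) := fun h =>
    hvc (mem_biUnion.2 ⟨i, mem_univ i, mem_inter.2 ⟨hv, h⟩⟩)
  rw [mem_closedNeighborFinset, not_or] at this
  exact ⟨Ne.symm this.1, this.2⟩

theorem not_copsWin_of_two_mul_add_one_le_minDegree
    (hG : ∀ u v, u ≠ v → #(G.closedNeighborFinset u ∩ G.closedNeighborFinset v) ≤ 2)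
    (hk : 2 * k + 1 ≤ G.minDegree) : ¬CopsWin G k := by
  cases isEmpty_or_nonempty V
  · simp [minDegree_of_subsingleton] at hk
  have hdeg (r : V) : 2 * k + 1 ≤ G.degree r := hk.trans (G.minDegree_le_degree r)
  refine not_copsWin_of_unguarded (fun c => ?_) fun c r hc => exists_unguarded_move hG (hdeg r) hc
  obtain ⟨r, -, hr⟩ : ∃ r ∈ univ, r ∉ univ.image c := exists_mem_notMem_of_card_lt_card <|
    calc #(univ.image c) ≤ k := card_image_le.trans (by simp)
      _ < #(univ : Finset V) := by have := G.minDegree_lt_card; rw [card_univ]; omega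
  obtain ⟨v, -, hv⟩ :=
    exists_unguarded_move hG (hdeg r) fun i h => hr (h ▸ mem_image_of_mem c (mem_univ i))
  exact ⟨v, hv⟩

theorem minDegree_add_one_div_two_le_copNumber
    (hG : ∀ u v, u ≠ v → #(G.closedNeighborFinset u ∩ G.closedNeighborFinset v) ≤ 2) :
    (G.minDegree + 1) / 2 ≤ copNumber G :=
  le_csInf ⟨_, G.copsWin_card⟩ fun k hk => by
    by_contra h
    exact not_copsWin_of_two_mul_add_one_le_minDegree hG (by omega) hk

end SimpleGraph

section Hypercube

variable {ι : Type*} [Fintype ι] [DecidableEq ι]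

lemma eq_update_of_hammingDist_eq_one {w y : ι → Bool} (h : hammingDist w y = 1) :
    ∃ j, w = Function.update y j (!y j) := by
  obtain ⟨j, hj⟩ := card_eq_one.1 h
  have hdiff (i : ι) : w i ≠ y i ↔ i = j := by simpa using Finset.ext_iff.1 hj i
  refine ⟨j, funext fun i => ?_⟩
  rcases eq_or_ne i j with rfl | hij
  · exact ((Bool.eq_or_eq_not _ _).resolve_left ((hdiff i).2 rfl)).trans (by simp)
  · rw [Function.update_of_ne hij]
    exact not_not.1 (mt (hdiff i).1 hij)

lemma exists_update_of_hammingDist_le_one {x y w : ι → Bool} (hxy : x ≠ y) (hwy : w ≠ y)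
    (hwx : hammingDist w x ≤ 1) (hwy' : hammingDist w y ≤ 1) :
    ∃ j, x j ≠ y j ∧ w = Function.update y j (!y j) := by
  have hwy1 : hammingDist w y = 1 := le_antisymm hwy' (hammingDist_pos.2 hwy)
  obtain ⟨j, rfl⟩ := eq_update_of_hammingDist_eq_one hwy1
  refine ⟨j, fun hxj => ?_, rfl⟩
  -- `x` agrees with `y` at `j`, so flipping `y` at `j` moves it one step further away from `x`.
  have hlt : hammingDist x y < hammingDist x (Function.update y j (!y j)) := by
    refine card_lt_card ((ssubset_iff_of_subset fun i hi => ?_).2 ⟨j, ?_, ?_⟩)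
    · have hij : i ≠ j := by rintro rfl; simp [hxj] at hi
      simpa [Function.update_of_ne hij] using hi
    · simp [hxj]
    · simp [hxj]
  have := hammingDist_pos.2 hxy
  rw [hammingDist_comm] at hwx
  omega

theorem card_closedHammingBall_one_inter_le_two {x y : ι → Bool} (hxy : x ≠ y) :
    #{w | hammingDist w x ≤ 1 ∧ hammingDist w y ≤ 1} ≤ 2 := by
  set T : Finset (ι → Bool) := {w | hammingDist w x ≤ 1 ∧ hammingDist w y ≤ 1}
  -- `T` contains `y` only if `x` and `y` are adjacent, and is empty if they are more than two
  -- steps apart; its other points are `y` flipped at a coordinate where it differs from `x`.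
  have hsub :
      T.erase y ⊆ ({j | x j ≠ y j} : Finset ι).image fun j => Function.update y j (!y j) := by
    intro w hw
    obtain ⟨hwy, hw⟩ := mem_erase.1 hw
    obtain ⟨j, hj, rfl⟩ := exists_update_of_hammingDist_le_one hxy hwy (mem_filter.1 hw).2.1
      (mem_filter.1 hw).2.2
    exact mem_image_of_mem _ (mem_filter.2 ⟨mem_univ j, hj⟩)
  have herase : #(T.erase y) ≤ hammingDist x y := (card_le_card hsub).trans card_image_le
  obtain hT | ⟨w, hw⟩ := T.eq_empty_or_nonempty
  · simp [hT]
  have hw' := (mem_filter.1 hw).2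
  have := hammingDist_triangle x w y
  rw [hammingDist_comm x w] at this
  by_cases hy : y ∈ T
  · have := (mem_filter.1 hy).2.1
    rw [hammingDist_comm] at this
    have := card_erase_add_one hy
    omega
  · rw [erase_eq_of_notMem hy] at herase
    omega

end Hypercube

namespace Qcube

variable {n : ℕ} {S : Set (Fin n → Bool)} [Fintype S] [DecidableRel ((Qcube n).induce S).Adj]

lemma hammingDist_le_one_of_mem_closedNeighborFinset {u w : S}
    (h : w ∈ ((Qcube n).induce S).closedNeighborFinset u) : hammingDist w.val u.val ≤ 1 := by
  rcases SimpleGraph.mem_closedNeighborFinset.1 h with rfl | h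
  · simp
  · exact ((hammingDist_comm _ _).trans h).le

theorem card_closedNeighborFinset_inter_le_two {u v : S} (huv : u ≠ v) :
    #(((Qcube n).induce S).closedNeighborFinset u ∩
      ((Qcube n).induce S).closedNeighborFinset v) ≤ 2 :=
  (card_le_card_of_injOn Subtype.val (fun w hw => by
      rw [mem_coe, mem_inter] at hw
      simpa using ⟨hammingDist_le_one_of_mem_closedNeighborFinset hw.1,
        hammingDist_le_one_of_mem_closedNeighborFinset hw.2⟩)
    Subtype.val_injective.injOn).trans
    (card_closedHammingBall_one_inter_le_two (Subtype.val_injective.ne huv))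

end Qcube

theorem stmt3_general (n : ℕ) (S : Set (Fin n → Bool)) [Fintype ↥S]
    [DecidableRel ((Qcube n).induce S).Adj] :
    (((Qcube n).induce S).minDegree + 1) / 2 ≤ copNumber ((Qcube n).induce S) :=
  SimpleGraph.minDegree_add_one_div_two_le_copNumber fun _ _ =>
    Qcube.card_closedNeighborFinset_inter_le_two

/-- If `G` is a partial cube with minimum degree `δ`, then `c(G) ≥ ⌈δ/2⌉`. -/
theorem stmt3 (n : ℕ) (S : Set (Fin n → Bool)) [Fintype ↥S]
    [DecidableRel ((Qcube n).induce S).Adj]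
    (hconn : ((Qcube n).induce S).Connected)
    (hiso : ∀ u v : ↥S, ((Qcube n).induce S).dist u v = (Qcube n).dist u.val v.val) :
    (((Qcube n).induce S).minDegree + 1) / 2 ≤ copNumber ((Qcube n).induce S) :=
  stmt3_general n S
end

section
/- If G is a partial cube with minimum degree δ and C is a set of at most ⌈δ/2⌉ − 1 vertices of G, then C is not a dominating set of G. -/
/-!
Pick a vertex `v` outside `C`. Every vertex of the closed neighbourhood `N[v]`, which has at
least `δ + 1` elements, lies in `N[c]` for some `c ∈ C`, and `c ≠ v`. In a hypercube two distinct
closed neighbourhoods `N[x]`, `N[y]` share at most two vertices (at a bit `i` where `x` and `y`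
differ, a common one disagrees with exactly one of them, and is that word with bit `i` flipped), and this
persists in induced subgraphs.
Hence `δ + 1 ≤ 2 |C| ≤ 2 (⌈δ/2⌉ - 1) < δ + 1`.
-/

open SimpleGraph

section Hamming

variable {ι : Type*} [Fintype ι] [DecidableEq ι]

theorem eq_update_of_hammingDist_le_one {β : ι → Type*} [∀ i, DecidableEq (β i)]
    {x w : ∀ i, β i} (h : hammingDist x w ≤ 1) {i : ι} (hi : x i ≠ w i) :
    w = Function.update x i (w i) := by
  funext j
  by_cases hji : j = i
  · subst hji
    simp
  rw [Function.update_of_ne hji]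
  by_contra hne
  have hpair : ({i, j} : Finset ι) ⊆ Finset.univ.filter fun k => x k ≠ w k := by
    intro k hk
    rcases Finset.mem_insert.1 hk with rfl | hk
    · simpa using hi
    · simpa [Finset.mem_singleton.1 hk] using Ne.symm hne
  have := Finset.card_le_card hpair
  rw [Finset.card_pair (Ne.symm hji)] at this
  unfold hammingDist at h
  omega

theorem setOf_hammingDist_le_one_both_subset {x y : ι → Bool} {i : ι} (hi : x i ≠ y i) :
    {w | hammingDist x w ≤ 1 ∧ hammingDist y w ≤ 1} ⊆
      {Function.update x i (y i), Function.update y i (x i)} := by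
  rintro w ⟨hx, hy⟩
  have hwi : w i = y i ∨ w i = x i := by
    cases hxi : x i <;> cases hyi : y i <;> cases hwi : w i <;> simp_all
  rcases hwi with hwi | hwi
  · left
    rw [← hwi]
    exact eq_update_of_hammingDist_le_one hx (hwi ▸ hi)
  · right
    rw [← hwi]
    exact eq_update_of_hammingDist_le_one hy (hwi ▸ hi.symm)

end Hamming

namespace SimpleGraph

variable {V : Type*} (G : SimpleGraph V)

def closedNeighborSet (v : V) : Set V := insert v (G.neighborSet v)

def IsDominatingSet (C : Set V) : Prop := ∀ v, v ∈ C ∨ ∃ u ∈ C, G.Adj u v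

variable {G}

theorem mem_closedNeighborSet {v w : V} : w ∈ G.closedNeighborSet v ↔ w = v ∨ G.Adj v w :=
  Iff.rfl

theorem IsDominatingSet.exists_mem_closedNeighborSet {C : Set V} (hC : G.IsDominatingSet C)
    (v : V) : ∃ c ∈ C, v ∈ G.closedNeighborSet c := by
  rcases hC v with hv | ⟨u, hu, huv⟩
  · exact ⟨v, hv, Or.inl rfl⟩
  · exact ⟨u, hu, Or.inr huv⟩

theorem minDegree_add_one_le_ncard_closedNeighborSet [Fintype V] [DecidableRel G.Adj] (v : V) :
    G.minDegree + 1 ≤ (G.closedNeighborSet v).ncard := by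
  rw [closedNeighborSet, Set.ncard_insert_of_notMem G.notMem_neighborSet_self,
    ← Nat.card_coe_set_eq, Nat.card_eq_fintype_card, card_neighborSet_eq_degree]
  exact Nat.succ_le_succ (G.minDegree_le_degree v)

theorem ncard_closedNeighborSet_le_mul [Finite V] {k : ℕ}
    (hk : ∀ u v, u ≠ v → (G.closedNeighborSet u ∩ G.closedNeighborSet v).ncard ≤ k)
    {C : Set V} (hC : G.IsDominatingSet C) {v : V} (hv : v ∉ C) :
    (G.closedNeighborSet v).ncard ≤ k * C.ncard := by
  have hCfin := C.toFinite
  have hcover : G.closedNeighborSet v ⊆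
      ⋃ c ∈ hCfin.toFinset, G.closedNeighborSet c ∩ G.closedNeighborSet v := by
    intro w hw
    obtain ⟨c, hc, hwc⟩ := hC.exists_mem_closedNeighborSet w
    exact Set.mem_iUnion₂.2 ⟨c, hCfin.mem_toFinset.2 hc, hwc, hw⟩
  calc (G.closedNeighborSet v).ncard
      ≤ (⋃ c ∈ hCfin.toFinset, G.closedNeighborSet c ∩ G.closedNeighborSet v).ncard :=
        Set.ncard_le_ncard hcover
    _ ≤ ∑ c ∈ hCfin.toFinset, (G.closedNeighborSet c ∩ G.closedNeighborSet v).ncard :=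
        hCfin.toFinset.set_ncard_biUnion_le _
    _ ≤ hCfin.toFinset.card • k := Finset.sum_le_card_nsmul _ _ _ fun c hc =>
        hk c v (by rintro rfl; exact hv (hCfin.mem_toFinset.1 hc))
    _ = k * C.ncard := by rw [Set.ncard_eq_toFinset_card C hCfin, smul_eq_mul, mul_comm]

theorem mem_closedNeighborSet_induce {s : Set V} {v w : s} :
    w ∈ (G.induce s).closedNeighborSet v ↔ (w : V) ∈ G.closedNeighborSet v := by
  simp [mem_closedNeighborSet, Subtype.ext_iff]

theorem ncard_closedNeighborSet_inter_induce_le [Finite V] (s : Set V) (u v : s) :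
    ((G.induce s).closedNeighborSet u ∩ (G.induce s).closedNeighborSet v).ncard ≤
      (G.closedNeighborSet u ∩ G.closedNeighborSet v).ncard := by
  rw [← Set.ncard_image_of_injective _ Subtype.val_injective]
  refine Set.ncard_le_ncard ?_ (Set.toFinite _)
  rintro _ ⟨w, ⟨hwu, hwv⟩, rfl⟩
  exact ⟨mem_closedNeighborSet_induce.1 hwu, mem_closedNeighborSet_induce.1 hwv⟩

end SimpleGraph

theorem Qcube.closedNeighborSet_eq {n : ℕ} (x : Fin n → Bool) :
    (Qcube n).closedNeighborSet x = {w | hammingDist x w ≤ 1} := by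
  ext w
  rw [mem_closedNeighborSet, Set.mem_ofPred_eq, eq_comm, ← hammingDist_eq_zero]
  change hammingDist x w = 0 ∨ hammingDist x w = 1 ↔ _
  omega

theorem Qcube.ncard_closedNeighborSet_inter_le_two {n : ℕ} {x y : Fin n → Bool} (hxy : x ≠ y) :
    ((Qcube n).closedNeighborSet x ∩ (Qcube n).closedNeighborSet y).ncard ≤ 2 := by
  obtain ⟨i, hi⟩ := Function.ne_iff.1 hxy
  rw [Qcube.closedNeighborSet_eq, Qcube.closedNeighborSet_eq]
  calc _ ≤ ({Function.update x i (y i), Function.update y i (x i)} : Set _).ncard :=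
        Set.ncard_le_ncard (setOf_hammingDist_le_one_both_subset hi) (Set.toFinite _)
    _ ≤ 2 := (Set.ncard_insert_le _ _).trans (by rw [Set.ncard_singleton])

theorem stmt4_general (n : ℕ) (S : Set (Fin n → Bool)) [Fintype ↥S]
    [DecidableRel ((Qcube n).induce S).Adj]
    (hconn : ((Qcube n).induce S).Connected)
    (C : Set ↥S)
    (hC : C.ncard ≤ (((Qcube n).induce S).minDegree + 1) / 2 - 1) :
    ¬(∀ v : ↥S, v ∈ C ∨ ∃ u ∈ C, ((Qcube n).induce S).Adj u v) := by
  intro hdom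
  have : Nonempty S := hconn.nonempty
  obtain ⟨v, hv⟩ : ∃ v, v ∉ C := by
    by_contra! hall
    have := ((Qcube n).induce S).minDegree_lt_card
    rw [Set.eq_univ_of_forall hall, Set.ncard_univ, Nat.card_eq_fintype_card] at hC
    omega
  have hcover := ncard_closedNeighborSet_le_mul
    (fun u w huw => (ncard_closedNeighborSet_inter_induce_le S u w).trans
      (Qcube.ncard_closedNeighborSet_inter_le_two (Subtype.coe_injective.ne huw))) hdom hv
  have := ((Qcube n).induce S).minDegree_add_one_le_ncard_closedNeighborSet v
  omega

/-- If `G` is a partial cube with minimum degree `δ` and `C` is a set of at most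
`⌈δ/2⌉ - 1` vertices, then `C` is not a dominating set of `G`. -/
theorem stmt4 (n : ℕ) (S : Set (Fin n → Bool)) [Fintype ↥S]
    [DecidableRel ((Qcube n).induce S).Adj]
    (hconn : ((Qcube n).induce S).Connected)
    (hiso : ∀ u v : ↥S, ((Qcube n).induce S).dist u v = (Qcube n).dist u.val v.val)
    (C : Set ↥S)
    (hC : C.ncard ≤ (((Qcube n).induce S).minDegree + 1) / 2 - 1) :
    ¬(∀ v : ↥S, v ∈ C ∨ ∃ u ∈ C, ((Qcube n).induce S).Adj u v) :=
  stmt4_general n S hconn C hC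
end

section
/- Let G be a triangle-free graph in which any two vertices at distance 2 have at most two common neighbors, and let C be a dominating set of G. Then for any vertex u not in C, writing X = N(u) ∩ C and Y = N(u) \ C, we have |C| ≥ |X| + ⌈|Y|/2⌉. -/
/-!
Pick for every `y ∈ Y` a neighbour `f y ∈ C`. Triangle-freeness makes `f y` non-adjacent to `u`,
so `f '' Y` is a subset of `C` disjoint from `X` and every `f y` is at distance 2 from `u`.
A fibre of `f` over `c` consists of common neighbours of `u` and `c`, so it has at most two
elements and `|Y| ≤ 2 |f '' Y|`.
-/

open SimpleGraph

theorem Set.ncard_le_mul_ncard_image {α β : Type*} {s : Set α} (hs : s.Finite) (f : α → β)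
    (n : ℕ) (hn : ∀ b ∈ f '' s, {a ∈ s | f a = b}.ncard ≤ n) :
    s.ncard ≤ n * (f '' s).ncard := by
  classical
  rw [Set.ncard_eq_toFinset_card s hs, Set.ncard_eq_toFinset_card _ (hs.image f),
    Set.Finite.toFinset_image]
  refine Finset.card_le_mul_card_image _ n fun b hb => ?_
  have hb' : b ∈ f '' s := by simpa using hb
  simpa [← Set.ncard_coe_finset] using hn b hb'

namespace SimpleGraph

variable {V : Type*} {G : SimpleGraph V}

theorem CliqueFree.not_adj_of_adj_of_adj (h : G.CliqueFree 3) {u w v : V}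
    (huw : G.Adj u w) (hwv : G.Adj w v) : ¬G.Adj u v := by
  classical
  exact fun huv => h {u, w, v} (is3Clique_triple_iff.2 ⟨huw, huv, hwv⟩)

theorem CliqueFree.dist_eq_two_of_adj_of_adj (h : G.CliqueFree 3) {u w v : V}
    (huw : G.Adj u w) (hwv : G.Adj w v) (huv : u ≠ v) : G.dist u v = 2 := by
  have : G.edist u v = 2 :=
    edist_eq_two_iff.2 ⟨huv, h.not_adj_of_adj_of_adj huw hwv, w, huw, hwv.symm⟩
  simp [dist, this]

end SimpleGraph

/-- In a triangle-free graph where vertices at distance 2 have at most two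
common neighbors, for any dominating set `C` and any vertex `u ∉ C`, with
`X = N(u) ∩ C` and `Y = N(u) \ C`, we have `|C| ≥ |X| + ⌈|Y|/2⌉`. -/
theorem stmt6 {V : Type*} [Fintype V] (G : SimpleGraph V)
    (htf : G.CliqueFree 3)
    (h2 : ∀ x y : V, G.dist x y = 2 →
      {z : V | G.Adj x z ∧ G.Adj y z}.ncard ≤ 2)
    (C : Set V) (hdom : ∀ v : V, v ∈ C ∨ ∃ u ∈ C, G.Adj u v)
    (u : V) (hu : u ∉ C) :
    (G.neighborSet u ∩ C).ncard + ((G.neighborSet u \ C).ncard + 1) / 2 ≤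
      C.ncard := by
  set Y := G.neighborSet u \ C
  choose! f hfC hfY using fun y (hy : y ∈ Y) => (hdom y).resolve_left hy.2
  have hfu : ∀ y ∈ Y, ¬G.Adj u (f y) := fun y hy =>
    htf.not_adj_of_adj_of_adj hy.1 (hfY y hy).symm
  have hfibre : ∀ c ∈ f '' Y, {y ∈ Y | f y = c}.ncard ≤ 2 := by
    rintro _ ⟨y, hy, rfl⟩
    refine le_trans (Set.ncard_le_ncard ?_) <|
      h2 u (f y) (htf.dist_eq_two_of_adj_of_adj hy.1 (hfY y hy).symm fun h => hu (h ▸ hfC y hy))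
    rintro z ⟨hz, hzy⟩
    exact ⟨hz.1, hzy ▸ hfY z hz⟩
  have hY := Set.ncard_le_mul_ncard_image (Set.toFinite Y) f 2 hfibre
  have hdisj : Disjoint (G.neighborSet u ∩ C) (f '' Y) := by
    rw [Set.disjoint_right]
    rintro _ ⟨y, hy, rfl⟩ hX
    exact hfu y hy hX.1
  have hXC : (G.neighborSet u ∩ C).ncard + (f '' Y).ncard ≤ C.ncard := by
    rw [← Set.ncard_union_eq hdisj]
    exact Set.ncard_le_ncard (Set.union_subset Set.inter_subset_right (Set.image_subset_iff.2 hfC))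
  omega
end

section
/- The cop number of the n-dimensional hypercube Q_n satisfies c(Q_n) ≤ ⌈(n+1)/2⌉. -/
open SimpleGraph

/-!
Give each cop `i` a home block `B i` of at most two coordinates, one cop getting at most one, so
that the blocks cover all coordinates; `⌈(n+1)/2⌉` cops suffice for this. A cop that is not
adjacent to the robber corrects one coordinate outside its home block on which it disagrees with
the robber. A cop's weight is 2 for every disagreement with the robber outside its block plus 1
for every agreement inside it. Over a round (the robber moves, the cops reply) no cop's weight
grows, and the cop whose block contains the flipped coordinate (the cop with the one-point block,
if the robber stays) loses weight: if it disagreed with the robber only inside its block, a flip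
removing a disagreement leaves it adjacent to the robber, and any other flip removes an
agreement. So the total weight decreases until some cop catches the robber.
-/

open Finset
open scoped symmDiff

theorem CopsWin.of_potential {V : Type*} {G : SimpleGraph V} {k : ℕ} (S : CopStrategy G k)
    (Φ : (Fin k → V) → V → ℕ)
    (hΦ : ∀ c r r', (r' = r ∨ G.Adj r r') →
      (∃ i, S.move c r' i = r') ∨ Φ (S.move c r') r' < Φ c r) :
    CopsWin G k := by
  refine ⟨S, fun R => ?_⟩
  by_contra hsafe
  simp only [not_exists, not_or] at hsafe
  let play := gamePlay S R
  refine not_strictAnti_of_wellFoundedLT (fun t => Φ (play (t + 1)).1 (play t).2)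
    (strictAnti_nat_of_succ_lt fun t => ?_)
  rcases hΦ (play (t + 1)).1 (play t).2 (play (t + 1)).2 (R.valid _ _) with ⟨i, hi⟩ | hlt
  · exact absurd hi (hsafe (t + 1) i).2
  · exact hlt

namespace Finset

variable {α : Type*} [DecidableEq α]

theorem symmDiff_sdiff_distrib_right (s t u : Finset α) :
    (s ∆ t) \ u = (s \ u) ∆ (t \ u) := by
  ext
  simp only [mem_symmDiff, mem_sdiff]
  tauto

theorem symmDiff_inter_distrib_right (s t u : Finset α) :
    (s ∆ t) ∩ u = (s ∩ u) ∆ (t ∩ u) :=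
  inf_symmDiff_distrib_right s t u

theorem sdiff_erase_of_notMem {s : Finset α} {a : α} (h : a ∉ s) (t : Finset α) :
    s \ t.erase a = s \ t := by
  ext i
  by_cases hi : i = a <;> simp [hi, h]

theorem card_symmDiff_add_two_mul_card_inter (s t : Finset α) :
    #(s ∆ t) + 2 * #(s ∩ t) = #s + #t := by
  rw [symmDiff_def, sup_eq_union, card_union_of_disjoint disjoint_sdiff_sdiff]
  have := card_sdiff_add_card_inter s t
  have := card_sdiff_add_card_inter t s
  rw [inter_comm t s] at this
  omega

end Finset

section Weight

variable {ι : Type*} [DecidableEq ι]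

def weight (B D : Finset ι) : ℕ := 2 * #(D \ B) + #(B \ D)

/-- The `- 1` truncates: a cop with nothing to correct outside `B` stays put. -/
def weightAfterChase (B D : Finset ι) : ℕ := 2 * (#(D \ B) - 1) + #(B \ D)

theorem weightAfterChase_symmDiff_le {B D R : Finset ι} (hB : #B ≤ 2) (hR : #R ≤ 1)
    (hfar : 2 ≤ #(D ∆ R)) : weightAfterChase B (D ∆ R) ≤ weight B D := by
  have hout := card_symmDiff_add_two_mul_card_inter (D \ B) (R \ B)
  have hin := card_symmDiff_add_two_mul_card_inter (D ∩ B) (R ∩ B)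
  rw [← symmDiff_sdiff_distrib_right] at hout
  rw [← symmDiff_inter_distrib_right] at hin
  have := card_le_card (inter_subset_right (s₁ := D \ B) (s₂ := R \ B))
  have := card_le_card (inter_subset_right (s₁ := D ∩ B) (s₂ := R ∩ B))
  have := card_le_card (inter_subset_right (s₁ := D) (s₂ := B))
  have := card_le_card (inter_subset_right (s₁ := D ∆ R) (s₂ := B))
  have := card_sdiff_add_card_inter R B
  have := card_sdiff_add_card_inter (D ∆ R) B
  rw [weightAfterChase, weight, card_sdiff (s := D), card_sdiff (s := D ∆ R)]
  omega

theorem weightAfterChase_symmDiff_lt {B D R : Finset ι} (hB : #B ≤ #R + 1) (hR : #R ≤ 1)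
    (hRB : R ⊆ B) (hfar : 2 ≤ #(D ∆ R)) : weightAfterChase B (D ∆ R) < weight B D := by
  have hout := card_symmDiff_add_two_mul_card_inter (D \ B) (R \ B)
  have hin := card_symmDiff_add_two_mul_card_inter (D ∩ B) (R ∩ B)
  rw [← symmDiff_sdiff_distrib_right] at hout
  rw [← symmDiff_inter_distrib_right] at hin
  have hRout : #(R \ B) = 0 := by rw [sdiff_eq_empty_iff_subset.2 hRB, card_empty]
  have := card_le_card (inter_subset_right (s₁ := D \ B) (s₂ := R \ B))
  have := card_le_card (inter_subset_right (s₁ := D ∩ B) (s₂ := R ∩ B))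
  have := card_le_card (inter_subset_right (s₁ := D) (s₂ := B))
  have := card_le_card (inter_subset_right (s₁ := D ∆ R) (s₂ := B))
  have := card_sdiff_add_card_inter R B
  have := card_sdiff_add_card_inter (D ∆ R) B
  rw [weightAfterChase, weight, card_sdiff (s := D), card_sdiff (s := D ∆ R)]
  omega

end Weight

section Disagree

variable {ι : Type*} [Fintype ι]

def disagree (x y : ι → Bool) : Finset ι := {i | x i ≠ y i}

theorem mem_disagree {x y : ι → Bool} {i : ι} : i ∈ disagree x y ↔ x i ≠ y i := by
  simp [disagree]

theorem card_disagree (x y : ι → Bool) : #(disagree x y) = hammingDist x y := rfl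

theorem disagree_self (x : ι → Bool) : disagree x x = ∅ := by
  simp [disagree]

variable [DecidableEq ι]

theorem disagree_symmDiff_disagree (x y z : ι → Bool) :
    disagree x y ∆ disagree y z = disagree x z := by
  ext i
  simp only [disagree, mem_symmDiff, mem_filter, mem_univ, true_and]
  cases x i <;> cases y i <;> cases z i <;> decide

theorem disagree_update_self (x y : ι → Bool) (v : ι) :
    disagree (Function.update x v (y v)) y = (disagree x y).erase v := by
  ext i
  by_cases h : i = v <;> simp [disagree, h]

theorem hammingDist_update_self {x y : ι → Bool} {v : ι} (h : x v ≠ y v) :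
    hammingDist x (Function.update x v (y v)) = 1 := by
  rw [← card_disagree, card_eq_one]
  refine ⟨v, ?_⟩
  ext i
  by_cases hi : i = v <;> simp [disagree, hi, h]

noncomputable def chaseStep (B : Finset ι) (x r : ι → Bool) : ι → Bool :=
  if hammingDist x r ≤ 1 then r
  else if h : (disagree x r \ B).Nonempty then Function.update x h.choose (r h.choose) else x

theorem chaseStep_of_hammingDist_le_one {B : Finset ι} {x r : ι → Bool}
    (h : hammingDist x r ≤ 1) : chaseStep B x r = r :=
  if_pos h

theorem weight_disagree_chaseStep {B : Finset ι} {x r : ι → Bool} (hfar : 2 ≤ hammingDist x r) :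
    weight B (disagree (chaseStep B x r) r) = weightAfterChase B (disagree x r) := by
  rw [chaseStep, if_neg (by omega)]
  split_ifs with h
  · have hv := mem_sdiff.1 h.choose_spec
    rw [weight, weightAfterChase, disagree_update_self, erase_sdiff_comm,
      card_erase_of_mem h.choose_spec, sdiff_erase_of_notMem hv.2]
  · rw [weight, weightAfterChase, not_nonempty_iff_eq_empty.1 h, card_empty]

theorem weight_chaseStep_le {B : Finset ι} (hB : #B ≤ 2) {x r r' : ι → Bool}
    (hr : hammingDist r r' ≤ 1) (hfar : 2 ≤ hammingDist x r') :
    weight B (disagree (chaseStep B x r') r') ≤ weight B (disagree x r) := by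
  rw [weight_disagree_chaseStep hfar, ← disagree_symmDiff_disagree x r r']
  exact weightAfterChase_symmDiff_le hB hr (by rwa [disagree_symmDiff_disagree])

theorem weight_chaseStep_lt {B : Finset ι} {x r r' : ι → Bool}
    (hB : #B ≤ hammingDist r r' + 1) (hr : hammingDist r r' ≤ 1) (hrB : disagree r r' ⊆ B)
    (hfar : 2 ≤ hammingDist x r') :
    weight B (disagree (chaseStep B x r') r') < weight B (disagree x r) := by
  rw [weight_disagree_chaseStep hfar, ← disagree_symmDiff_disagree x r r']
  exact weightAfterChase_symmDiff_lt hB hr hrB (by rwa [disagree_symmDiff_disagree])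

end Disagree

theorem chaseStep_eq_or_adj {n : ℕ} (B : Finset (Fin n)) (x r : Fin n → Bool) :
    chaseStep B x r = x ∨ (Qcube n).Adj x (chaseStep B x r) := by
  unfold chaseStep
  split_ifs with hnear h
  · rcases Nat.le_one_iff_eq_zero_or_eq_one.1 hnear with h0 | h1
    · exact Or.inl (hammingDist_eq_zero.1 h0).symm
    · exact Or.inr h1
  · exact Or.inr (hammingDist_update_self (mem_disagree.1 (mem_sdiff.1 h.choose_spec).1))
  · exact Or.inl rfl

noncomputable def chaseStrategy {n k : ℕ} (B : Fin k → Finset (Fin n)) :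
    CopStrategy (Qcube n) k where
  init _ _ := false
  move c r i := chaseStep (B i) (c i) r
  valid c r i := chaseStep_eq_or_adj (B i) (c i) r

theorem copsWin_Qcube_of_cover {n k : ℕ} (B : Fin k → Finset (Fin n))
    (hcover : ∀ u, ∃ i, u ∈ B i) (hB : ∀ i, #(B i) ≤ 2) (hsmall : ∃ i, #(B i) ≤ 1) :
    CopsWin (Qcube n) k := by
  refine CopsWin.of_potential (chaseStrategy B)
    (fun c r => ∑ i, weight (B i) (disagree (c i) r)) fun c r r' hr => ?_
  by_cases hnear : ∃ i, hammingDist (c i) r' ≤ 1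
  · obtain ⟨i, hi⟩ := hnear
    exact Or.inl ⟨i, chaseStep_of_hammingDist_le_one hi⟩
  simp only [not_exists, not_le] at hnear
  have hr1 : hammingDist r r' ≤ 1 := by
    rcases hr with rfl | hadj
    · simp
    · exact hadj.le
  obtain ⟨j, hjB, hjr⟩ : ∃ j, #(B j) ≤ hammingDist r r' + 1 ∧ disagree r r' ⊆ B j := by
    rcases hr with rfl | hadj
    · obtain ⟨j, hj⟩ := hsmall
      exact ⟨j, by simpa using hj, by simp [disagree_self]⟩
    · obtain ⟨u, hu⟩ := card_eq_one.1 (show #(disagree r r') = 1 from hadj)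
      obtain ⟨j, hj⟩ := hcover u
      exact ⟨j, by rw [show hammingDist r r' = 1 from hadj]; exact hB j, by simpa [hu] using hj⟩
  exact Or.inr (sum_lt_sum (fun i _ => weight_chaseStep_le (hB i) hr1 (hnear i))
    ⟨j, mem_univ j, weight_chaseStep_lt hjB hr1 hjr (hnear j)⟩)

theorem copsWin_Qcube_of_le {n k : ℕ} (h : n + 1 ≤ 2 * k) : CopsWin (Qcube n) k := by
  refine copsWin_Qcube_of_cover (fun i => {u | (u.val + 1) / 2 = i.val})
    (fun u => ⟨⟨(u.val + 1) / 2, by omega⟩, by simp⟩) (fun i => ?_) ⟨⟨0, by omega⟩, ?_⟩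
  · refine (card_le_card_of_injOn Fin.val (t := {2 * i.val - 1, 2 * i.val}) ?_
      Fin.val_injective.injOn).trans card_le_two
    intro u hu
    have hui : (u.val + 1) / 2 = i.val := (mem_filter.1 hu).2
    rw [mem_coe, mem_insert, mem_singleton]
    omega
  · refine (card_le_card_of_injOn Fin.val (t := {0}) ?_ Fin.val_injective.injOn).trans
      (card_singleton 0).le
    intro u hu
    have hu0 : (u.val + 1) / 2 = 0 := (mem_filter.1 hu).2
    rw [mem_coe, mem_singleton]
    omega

/-- The cop number of the hypercube `Q_n` is at most `⌈(n+1)/2⌉`. -/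
theorem stmt8 (n : ℕ) : copNumber (Qcube n) ≤ (n + 2) / 2 :=
  Nat.sInf_le (copsWin_Qcube_of_le (by omega))
end

section
/- The Fibonacci cube Γ_n is an isometric subgraph of the hypercube Q_n; that is, for any two vertices x, y of Γ_n, the distance between x and y in Γ_n equals their Hamming distance. -/
open SimpleGraph

/-- A binary string has no two consecutive ones. -/
def NoConsecOnes {n : ℕ} (x : Fin n → Bool) : Prop :=
  ∀ i j : Fin n, (j : ℕ) = (i : ℕ) + 1 → ¬(x i = true ∧ x j = true)

/-- The vertex set of the Fibonacci cube: binary strings with no two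
consecutive ones. -/
def fibSet (n : ℕ) : Set (Fin n → Bool) := {x | NoConsecOnes x}

/-- The Fibonacci cube `Γ_n`, the subgraph of `Q_n` induced by strings with no
two consecutive ones. -/
def FibCube (n : ℕ) : SimpleGraph ↥(fibSet n) := (Qcube n).induce (fibSet n)

/-! A set of vertices of the hypercube that is closed downwards (turning ones into zeros stays
inside it) induces an isometric subgraph. A walk never changes more than one bit per step, so it
is at least as long as the Hamming distance. Conversely, from `x` towards `y` one can always flip
a differing bit and stay inside the set: if some bit is `1` in `x` and `0` in `y`, switching it off
gives a string below `x`; otherwise `x ≤ y`, and switching on any differing bit gives a string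
below `y`. The strings with no two consecutive ones form such a lower set. -/

section Hamming

variable {ι : Type*} [Fintype ι] [DecidableEq ι] {β : Type*} [DecidableEq β]

lemma hammingDist_update_self_of_ne {x : ι → β} {i : ι} {b : β} (h : x i ≠ b) :
    hammingDist x (Function.update x i b) = 1 := by
  rw [hammingDist, Finset.card_eq_one]
  refine ⟨i, Finset.ext fun j => ?_⟩
  by_cases hj : j = i
  · subst hj; simpa using h
  · simp [hj]

lemma hammingDist_update_add_one {x y : ι → β} {i : ι} (h : x i ≠ y i) :
    hammingDist (Function.update x i (y i)) y + 1 = hammingDist x y := by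
  have hdiff : ({j | Function.update x i (y i) j ≠ y j} : Finset ι) =
      ({j | x j ≠ y j} : Finset ι).erase i := by
    ext j
    by_cases hj : j = i
    · subst hj; simp
    · simp [hj]
  rw [hammingDist, hammingDist, hdiff, Finset.card_erase_add_one (by simpa using h)]

end Hamming

lemma IsLowerSet.exists_update_mem {ι : Type*} [DecidableEq ι] {S : Set (ι → Bool)}
    (hS : IsLowerSet S) {x y : ι → Bool} (hx : x ∈ S) (hy : y ∈ S) (hne : x ≠ y) :
    ∃ i, x i ≠ y i ∧ Function.update x i (y i) ∈ S := by
  by_cases hxy : x ≤ y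
  · obtain ⟨i, hi⟩ := Function.ne_iff.mp hne
    exact ⟨i, hi, hS (update_le_iff.2 ⟨le_rfl, fun j _ => hxy j⟩) hy⟩
  · obtain ⟨i, hi⟩ : ∃ i, ¬x i ≤ y i := by simpa [Pi.le_def] using hxy
    exact ⟨i, fun h => hi h.le, hS (update_le_iff.2 ⟨le_of_not_ge hi, fun j _ => le_rfl⟩) hx⟩

namespace Qcube

variable {n : ℕ}

lemma hammingDist_le_length {x y : Fin n → Bool} (p : (Qcube n).Walk x y) :
    hammingDist x y ≤ p.length := by
  induction p with
  | nil => simp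
  | @cons u v w huv p ih =>
    have huv : hammingDist u v = 1 := huv
    have := hammingDist_triangle u v w
    simp only [Walk.length_cons]
    omega

lemma exists_walk_induce_length_eq {S : Set (Fin n → Bool)} (hS : IsLowerSet S) (x y : S) :
    ∃ p : ((Qcube n).induce S).Walk x y, p.length = hammingDist x.1 y.1 := by
  induction hk : hammingDist x.1 y.1 generalizing x with
  | zero =>
    obtain rfl : x = y := Subtype.ext (hammingDist_eq_zero.mp hk)
    exact ⟨.nil, rfl⟩
  | succ k ih =>
    have hne : x.1 ≠ y.1 := hammingDist_ne_zero.mp (by omega)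
    obtain ⟨i, hi, hmem⟩ := hS.exists_update_mem x.2 y.2 hne
    have hadj : ((Qcube n).induce S).Adj x ⟨_, hmem⟩ := hammingDist_update_self_of_ne hi
    have hrest := hammingDist_update_add_one hi
    obtain ⟨p, hp⟩ := ih ⟨_, hmem⟩ (by simp only; omega)
    exact ⟨.cons hadj p, by simp [hp]⟩

theorem dist_induce_eq_hammingDist {S : Set (Fin n → Bool)} (hS : IsLowerSet S) (x y : S) :
    ((Qcube n).induce S).dist x y = hammingDist x.1 y.1 := by
  obtain ⟨p, hp⟩ := exists_walk_induce_length_eq hS x y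
  obtain ⟨q, hq⟩ := Reachable.exists_walk_length_eq_dist ⟨p⟩
  have hlower := hammingDist_le_length (q.map (Embedding.induce S).toHom)
  rw [Walk.length_map, hq] at hlower
  exact le_antisymm (hp ▸ dist_le p) hlower

end Qcube

lemma isLowerSet_fibSet (n : ℕ) : IsLowerSet (fibSet n) := by
  intro a b hba ha i j hij ⟨hi, hj⟩
  exact ha i j hij
    ⟨top_le_iff.1 (hi ▸ hba i : true ≤ a i), top_le_iff.1 (hj ▸ hba j : true ≤ a j)⟩

/-- The Fibonacci cube `Γ_n` is an isometric subgraph of `Q_n`: the distance in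
`Γ_n` between any two vertices equals their Hamming distance. -/
theorem stmt11 (n : ℕ) (x y : ↥(fibSet n)) :
    (FibCube n).dist x y = hammingDist x.val y.val :=
  Qcube.dist_induce_eq_hammingDist (isLowerSet_fibSet n) x y
end

section
/- The minimum degree of the Fibonacci cube Γ_n is ⌊(n+2)/3⌋ for n ≥ 1. -/
open SimpleGraph

/-!
The neighbours of a Fibonacci string `x` are the strings obtained by one valid flip of a bit.
Flipping bit `i` is valid iff `x i = 1` or both neighbours of `i` are `0`; hence every position
lies within distance one of a valid flip (itself, or a neighbouring `1`), so there are at least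
`n / 3` valid flips. The string `010010010…` attains `⌈n / 3⌉`: its valid flips are its ones,
plus the last position when `n ≡ 1 mod 3`.
-/

open Finset

section Flip

variable {ι : Type*} [DecidableEq ι]

def flipBit (x : ι → Bool) (i : ι) : ι → Bool := Function.update x i (!x i)

lemma flipBit_apply (x : ι → Bool) (i j : ι) :
    flipBit x i j = if j = i then !x i else x j := by
  simp [flipBit, Function.update]

lemma flipBit_injective (x : ι → Bool) : Function.Injective (flipBit x) := by
  intro i j h
  by_contra hij
  simpa [flipBit_apply, hij] using congrFun h i

lemma hammingDist_eq_one_iff [Fintype ι] {x y : ι → Bool} :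
    hammingDist x y = 1 ↔ ∃ i, y = flipBit x i := by
  simp only [hammingDist, card_eq_one, Finset.ext_iff, funext_iff, mem_filter, mem_univ,
    true_and, mem_singleton, flipBit_apply]
  refine exists_congr fun i => forall_congr' fun j => ?_
  by_cases hj : j = i
  · subst hj; cases x j <;> cases y j <;> simp
  · cases x j <;> cases y j <;> simp [hj]

end Flip

variable {n : ℕ}

instance : DecidablePred (@NoConsecOnes n) := fun x => by
  unfold NoConsecOnes; infer_instance

def validFlips (x : Fin n → Bool) : Finset (Fin n) := {i | NoConsecOnes (flipBit x i)}

lemma noConsecOnes_flipBit_iff {x : Fin n → Bool} (hx : NoConsecOnes x) (i : Fin n) :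
    NoConsecOnes (flipBit x i) ↔
      x i = true ∨ ∀ j : Fin n, ((j : ℕ) + 1 = i ∨ (i : ℕ) + 1 = j) → x j = false := by
  constructor
  · intro h
    refine or_iff_not_imp_left.mpr fun hxi j hj => ?_
    have hji : j ≠ i := Fin.ne_of_val_ne (by omega)
    have hfi : flipBit x i i = true := by simpa [flipBit_apply] using hxi
    by_contra hxj
    have hfj : flipBit x i j = true := by simpa [flipBit_apply, hji] using hxj
    rcases hj with hj | hj
    · exact h j i hj.symm ⟨hfj, hfi⟩
    · exact h i j hj.symm ⟨hfi, hfj⟩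
  · rintro (hxi | hnbr) a b hab ⟨ha, hb⟩
    · have h_le : ∀ j, flipBit x i j = true → x j = true := by
        intro j hj
        by_cases hji : j = i
        · exact hji ▸ hxi
        · simpa [flipBit_apply, hji] using hj
      exact hx a b hab ⟨h_le a ha, h_le b hb⟩
    · have hval : ∀ j, j ≠ i → flipBit x i j = x j := fun j hji => by simp [flipBit_apply, hji]
      by_cases hai : a = i
      · subst hai
        have hba : b ≠ a := Fin.ne_of_val_ne (by omega)
        simp [hval b hba, hnbr b (Or.inr hab.symm)] at hb
      by_cases hbi : b = i
      · subst hbi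
        simp [hval a hai, hnbr a (Or.inl hab.symm)] at ha
      exact hx a b hab ⟨hval a hai ▸ ha, hval b hbi ▸ hb⟩

lemma degree_eq_card_validFlips [Fintype ↥(fibSet n)] [DecidableRel (FibCube n).Adj]
    (u : ↥(fibSet n)) : (FibCube n).degree u = #(validFlips u.1) := by
  rw [← card_neighborFinset_eq_degree]
  symm
  refine card_bij (fun i hi => ⟨flipBit u.1 i, (mem_filter.mp hi).2⟩) ?_ ?_ ?_
  · intro i _
    rw [mem_neighborFinset]
    exact hammingDist_eq_one_iff.mpr ⟨i, rfl⟩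
  · intro i _ j _ hij
    exact flipBit_injective u.1 (congrArg Subtype.val hij)
  · intro v hv
    obtain ⟨i, hi⟩ := hammingDist_eq_one_iff.mp ((mem_neighborFinset _ _ _).mp hv)
    exact ⟨i, mem_filter.mpr ⟨mem_univ _, hi ▸ v.2⟩, Subtype.ext hi.symm⟩

lemma le_three_mul_card_of_forall_near (s : Finset (Fin n))
    (hs : ∀ j : Fin n, ∃ k ∈ s, (k : ℕ) = j ∨ (k : ℕ) + 1 = j ∨ (j : ℕ) + 1 = k) :
    n ≤ 3 * #s := by
  have hcover : range n ⊆ (s.image Fin.val).biUnion fun k => {k - 1, k, k + 1} := by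
    intro j hj
    obtain ⟨k, hk, hjk⟩ := hs ⟨j, mem_range.mp hj⟩
    simp only at hjk
    simp only [mem_biUnion, mem_image, mem_insert, mem_singleton]
    exact ⟨k, ⟨k, hk, rfl⟩, by omega⟩
  calc n = #(range n) := (card_range n).symm
    _ ≤ #(s.image Fin.val) * 3 :=
        (card_le_card hcover).trans (card_biUnion_le_card_mul _ _ 3 fun _ _ => card_le_three)
    _ ≤ 3 * #s := by rw [mul_comm]; exact Nat.mul_le_mul_left 3 card_image_le

lemma le_three_mul_card_validFlips {x : Fin n → Bool} (hx : NoConsecOnes x) :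
    n ≤ 3 * #(validFlips x) := by
  refine le_three_mul_card_of_forall_near _ fun j => ?_
  simp only [validFlips, mem_filter, mem_univ, true_and, noConsecOnes_flipBit_iff hx]
  by_cases hj : x j = true ∨ ∀ k : Fin n, ((k : ℕ) + 1 = j ∨ (j : ℕ) + 1 = k) → x k = false
  · exact ⟨j, hj, Or.inl rfl⟩
  · push Not at hj
    obtain ⟨k, hjk, hk⟩ := hj.2
    exact ⟨k, Or.inl (by simpa using hk), by omega⟩

def sparseString (n : ℕ) : Fin n → Bool := fun i => decide ((i : ℕ) % 3 = 1)

lemma noConsecOnes_sparseString : NoConsecOnes (sparseString n) := by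
  intro a b hab
  simp only [sparseString, decide_eq_true_eq]
  omega

lemma mem_validFlips_sparseString {i : Fin n} (hi : i ∈ validFlips (sparseString n)) :
    (i : ℕ) % 3 = 1 ∨ (i : ℕ) % 3 = 0 ∧ (i : ℕ) + 1 = n := by
  simp only [validFlips, mem_filter, mem_univ, true_and,
    noConsecOnes_flipBit_iff noConsecOnes_sparseString, sparseString, decide_eq_true_eq,
    decide_eq_false_iff_not] at hi
  refine or_iff_not_imp_left.mpr fun h_one => ?_
  have hnbr := hi.resolve_left h_one
  have h_zero : (i : ℕ) % 3 = 0 := by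
    by_contra h_two
    exact hnbr ⟨i - 1, by omega⟩ (Or.inl (by simp only; omega)) (by simp only; omega)
  refine ⟨h_zero, ?_⟩
  by_contra h_last
  exact hnbr ⟨i + 1, by omega⟩ (Or.inr rfl) (by simp only; omega)

lemma card_validFlips_sparseString_le : #(validFlips (sparseString n)) ≤ (n + 2) / 3 := by
  -- `i ↦ i / 3` is injective on the valid flips, which lie in distinct blocks of three
  refine (card_le_card_of_injOn (t := range ((n + 2) / 3)) (fun i : Fin n => (i : ℕ) / 3)
    (fun i _ => ?_) ?_).trans_eq (card_range _)
  · have := i.isLt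
    simp only [coe_range, Set.mem_Iio]
    omega
  · intro i hi j hj hij
    have := i.isLt
    have := mem_validFlips_sparseString hi
    have := mem_validFlips_sparseString hj
    exact Fin.ext (by simp only at hij; omega)

theorem stmt12_general (n : ℕ) [Fintype ↥(fibSet n)]
    [DecidableRel (FibCube n).Adj] :
    (FibCube n).minDegree = (n + 2) / 3 := by
  let w : ↥(fibSet n) := ⟨sparseString n, noConsecOnes_sparseString⟩
  have : Nonempty ↥(fibSet n) := ⟨w⟩
  apply le_antisymm
  · calc (FibCube n).minDegree ≤ (FibCube n).degree w := minDegree_le_degree _ _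
      _ = #(validFlips (sparseString n)) := degree_eq_card_validFlips w
      _ ≤ (n + 2) / 3 := card_validFlips_sparseString_le
  · refine le_minDegree_of_forall_le_degree _ _ fun v => ?_
    have := le_three_mul_card_validFlips v.2
    rw [degree_eq_card_validFlips v]
    omega

/-- The minimum degree of the Fibonacci cube `Γ_n` is `⌊(n+2)/3⌋` for `n ≥ 1`. -/
theorem stmt12 (n : ℕ) (hn : 1 ≤ n) [Fintype ↥(fibSet n)]
    [DecidableRel (FibCube n).Adj] :
    (FibCube n).minDegree = (n + 2) / 3 :=
  stmt12_general n
end
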